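/- For every group homomorphism φ : S₁₈ → Aut(H) satisfying φ(σ)(x_i) = x_{σ(i)}, φ(σ)(y_i) = y_{σ(i)} and φ(σ)(z) = z for all σ and i, the center of the semidirect product H ⋊_φ S₁₈ is exactly the (infinite cyclic) subgroup generated by the image of z. -/

import Mathlib

/-- Generators of the group `H`: `x i`, `y i` for `i : Fin 18`, and `z`. -/
inductive HGen : Type
  | x : Fin 18 → HGen
  | y : Fin 18 → HGen
  | z : HGen

/-- The free-group generator corresponding to `x i`. -/
def fx (i : Fin 18) : FreeGroup HGen := FreeGroup.of (HGen.x i)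
/-- The free-group generator corresponding to `y i`. -/
def fy (i : Fin 18) : FreeGroup HGen := FreeGroup.of (HGen.y i)
/-- The free-group generator corresponding to `z`. -/
def fz : FreeGroup HGen := FreeGroup.of HGen.z

/-- The relations of the presentation of `H`:
`[xᵢ, xⱼ] = [yᵢ, yⱼ] = [xᵢ, yⱼ] = 1` for `i ≠ j`, `[xᵢ, yᵢ] = z`,
and `z` commutes with all the generators. -/
def HRels : Set (FreeGroup HGen) :=
  { r | (∃ i j : Fin 18, i ≠ j ∧ r = fx i * fx j * (fx i)⁻¹ * (fx j)⁻¹)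
      ∨ (∃ i j : Fin 18, i ≠ j ∧ r = fy i * fy j * (fy i)⁻¹ * (fy j)⁻¹)
      ∨ (∃ i j : Fin 18, i ≠ j ∧ r = fx i * fy j * (fx i)⁻¹ * (fy j)⁻¹)
      ∨ (∃ i : Fin 18, r = fx i * fy i * (fx i)⁻¹ * (fy i)⁻¹ * fz⁻¹)
      ∨ (∃ i : Fin 18, r = fx i * fz * (fx i)⁻¹ * fz⁻¹)
      ∨ (∃ i : Fin 18, r = fy i * fz * (fy i)⁻¹ * fz⁻¹) }

/-- The group `H`, given by the above presentation. -/
abbrev Hgrp : Type := PresentedGroup HRels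

/-- The generator `xᵢ` of `H`. -/
def xH (i : Fin 18) : Hgrp := PresentedGroup.of (HGen.x i)
/-- The generator `yᵢ` of `H`. -/
def yH (i : Fin 18) : Hgrp := PresentedGroup.of (HGen.y i)
/-- The generator `z` of `H`. -/
def zH : Hgrp := PresentedGroup.of HGen.z

/-!
`H` is the integral Heisenberg group of rank 18. It maps to the concrete group on
`ℤ¹⁸ × ℤ¹⁸ × ℤ` with `(a, b, c) (a', b', c') = (a + a', b + b', c + c' + a ⬝ b')`, sending `z`
to `(0, 0, 1)`, which has infinite order. There the commutator of `(a, b, c)` and `(a', b', c')`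
is `(0, 0, a ⬝ b' - a' ⬝ b)`, so an element central in `H` has trivial horizontal part `(a, b)`.
Modulo `⟨z⟩` the images of the `xᵢ, yᵢ` commute, so the horizontal part has a left inverse
`ℤ¹⁸ × ℤ¹⁸ → H ⧸ ⟨z⟩`; hence the center of `H` is `⟨z⟩`. In `H ⋊ S₁₈`, the `S₁₈`-component
of a central element is central in `S₁₈`, hence trivial, and its `H`-component is then central
in `H`; conversely `φ` fixes `z`.
-/

open Matrix Subgroup
open scoped commutatorElement

lemma Subgroup.normal_of_le_center {G : Type*} [Group G] {N : Subgroup G}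
    (hN : N ≤ center G) : N.Normal :=
  ⟨fun n hn g => by rwa [(mem_center_iff.mp (hN hn) g), mul_inv_cancel_right]⟩

theorem Equiv.Perm.center_eq_bot {α : Type*} [DecidableEq α] (hα : 3 ≤ Cardinal.mk α) :
    center (Equiv.Perm α) = ⊥ := by
  refine eq_bot_iff.mpr fun σ hσ => mem_bot.mpr <| Equiv.ext fun p => ?_
  by_contra hp
  rw [Equiv.Perm.one_apply] at hp
  obtain ⟨c, hcp, hcσ⟩ := Cardinal.exists_ne_ne_of_three_le hα p (σ p)
  have h := congrArg (· p) (mem_center_iff.mp hσ (Equiv.swap p c))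
  simp only [Equiv.Perm.mul_apply, Equiv.swap_apply_left,
    Equiv.swap_apply_of_ne_of_ne hp hcσ.symm] at h
  exact hcp (σ.injective h.symm)

namespace SemidirectProduct

variable {N G : Type*} [Group N] [Group G] {φ : G →* MulAut N}

theorem center_eq_map_inl (hG : center G = ⊥) (hφ : ∀ n ∈ center N, ∀ g, φ g n = n) :
    center (N ⋊[φ] G) = (center N).map inl := by
  apply le_antisymm
  · intro g hg
    have hright : g.right = 1 := by
      rw [← mem_bot, ← hG, mem_center_iff]
      intro k
      simpa using congrArg right (mem_center_iff.mp hg (inr k))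
    refine ⟨g.left, mem_center_iff.mpr fun n => ?_, ?_⟩
    · simpa [hright] using congrArg left (mem_center_iff.mp hg (inl n))
    · ext <;> simp [hright]
  · rintro _ ⟨n, hn, rfl⟩
    refine mem_center_iff.mpr fun k => ?_
    ext
    · simp [hφ n hn, mem_center_iff.mp hn]
    · simp

end SemidirectProduct

lemma PresentedGroup.commute_of_of {α : Type*} {rels : Set (FreeGroup α)} {a b : α}
    (h : ⁅FreeGroup.of a, FreeGroup.of b⁆ ∈ rels) :
    Commute (PresentedGroup.of a : PresentedGroup rels) (PresentedGroup.of b) := by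
  rw [← commutatorElement_eq_one_iff_commute]
  exact (map_commutatorElement (PresentedGroup.mk rels) _ _).symm.trans (one_of_mem h)

lemma QuotientGroup.commute_mk_of_commutatorElement_mem {G : Type*} [Group G] {N : Subgroup G}
    [N.Normal] {a b : G} (h : ⁅a, b⁆ ∈ N) : Commute (a : G ⧸ N) b :=
  commutatorElement_eq_one_iff_commute.mp <|
    (map_commutatorElement (QuotientGroup.mk' N) a b).symm.trans
      ((QuotientGroup.eq_one_iff _).mpr h)

@[ext] structure Heisenberg (ι : Type*) where
  a : ι → ℤ
  b : ι → ℤ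
  c : ℤ

namespace Heisenberg

variable {ι : Type*}

instance : One (Heisenberg ι) := ⟨⟨0, 0, 0⟩⟩

@[simp] lemma one_a : (1 : Heisenberg ι).a = 0 := rfl
@[simp] lemma one_b : (1 : Heisenberg ι).b = 0 := rfl
@[simp] lemma one_c : (1 : Heisenberg ι).c = 0 := rfl

def z : Heisenberg ι := ⟨0, 0, 1⟩

variable [Fintype ι]

instance : Mul (Heisenberg ι) :=
  ⟨fun p q => ⟨p.a + q.a, p.b + q.b, p.c + q.c + p.a ⬝ᵥ q.b⟩⟩
instance : Inv (Heisenberg ι) := ⟨fun p => ⟨-p.a, -p.b, -p.c + p.a ⬝ᵥ p.b⟩⟩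

@[simp] lemma mul_a (p q : Heisenberg ι) : (p * q).a = p.a + q.a := rfl
@[simp] lemma mul_b (p q : Heisenberg ι) : (p * q).b = p.b + q.b := rfl
@[simp] lemma mul_c (p q : Heisenberg ι) : (p * q).c = p.c + q.c + p.a ⬝ᵥ q.b := rfl
@[simp] lemma inv_a (p : Heisenberg ι) : p⁻¹.a = -p.a := rfl
@[simp] lemma inv_b (p : Heisenberg ι) : p⁻¹.b = -p.b := rfl
@[simp] lemma inv_c (p : Heisenberg ι) : p⁻¹.c = -p.c + p.a ⬝ᵥ p.b := rfl

instance : Group (Heisenberg ι) where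
  mul_assoc p q r := by
    ext1 <;> simp only [mul_a, mul_b, mul_c, add_dotProduct, dotProduct_add] <;> abel
  one_mul p := by ext1 <;> simp
  mul_one p := by ext1 <;> simp
  inv_mul_cancel p := by ext1 <;> simp

lemma commutatorElement_eq (p q : Heisenberg ι) :
    (⁅p, q⁆ : Heisenberg ι) = ⟨0, 0, p.a ⬝ᵥ q.b - q.a ⬝ᵥ p.b⟩ := by
  ext1 <;>
    simp only [commutatorElement_def, mul_a, mul_b, mul_c, inv_a, inv_b, inv_c, add_dotProduct,
      dotProduct_neg, neg_dotProduct] <;>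
    abel

lemma commute_iff {p q : Heisenberg ι} : Commute p q ↔ p.a ⬝ᵥ q.b = q.a ⬝ᵥ p.b := by
  rw [← commutatorElement_eq_one_iff_commute, commutatorElement_eq, Heisenberg.ext_iff]
  simp [sub_eq_zero]

lemma z_pow (n : ℕ) : (z : Heisenberg ι) ^ n = ⟨0, 0, n⟩ := by
  induction n with
  | zero => rfl
  | succ n ih => rw [pow_succ, ih]; ext1 <;> simp [z]

lemma not_isOfFinOrder_z : ¬IsOfFinOrder (z : Heisenberg ι) :=
  not_isOfFinOrder_of_injective_pow fun m n h => by simpa [z_pow] using congrArg c h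

def horizontal : Heisenberg ι →* (ι ⊕ ι → Multiplicative ℤ) where
  toFun p k := Multiplicative.ofAdd (Sum.elim p.a p.b k)
  map_one' := by funext k; cases k <;> rfl
  map_mul' p q := by funext k; cases k <;> rfl

lemma horizontal_z : horizontal (z : Heisenberg ι) = 1 := by
  funext k; cases k <;> rfl

variable [DecidableEq ι]

def x (i : ι) : Heisenberg ι := ⟨Pi.single i 1, 0, 0⟩
def y (i : ι) : Heisenberg ι := ⟨0, Pi.single i 1, 0⟩

lemma horizontal_x (i : ι) : horizontal (x i) = Pi.mulSingle (Sum.inl i) (.ofAdd 1) := by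
  funext k; rcases k with j | j <;> by_cases h : j = i <;> simp [horizontal, x, h]

lemma horizontal_y (i : ι) : horizontal (y i) = Pi.mulSingle (Sum.inr i) (.ofAdd 1) := by
  funext k; rcases k with j | j <;> by_cases h : j = i <;> simp [horizontal, y, h]

lemma horizontal_eq_one_of_commute {p : Heisenberg ι} (hx : ∀ i, Commute p (x i))
    (hy : ∀ i, Commute p (y i)) : horizontal p = 1 := by
  funext k
  cases k with
  | inl i => simpa [horizontal, commute_iff, x, y] using hy i
  | inr i => simpa [horizontal, commute_iff, x, y] using (hx i).symm

end Heisenberg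

lemma commute_xH_xH (i j : Fin 18) : Commute (xH i) (xH j) := by
  obtain rfl | h := eq_or_ne i j
  · exact .refl _
  · exact PresentedGroup.commute_of_of (Or.inl ⟨i, j, h, rfl⟩)

lemma commute_yH_yH (i j : Fin 18) : Commute (yH i) (yH j) := by
  obtain rfl | h := eq_or_ne i j
  · exact .refl _
  · exact PresentedGroup.commute_of_of (Or.inr <| Or.inl ⟨i, j, h, rfl⟩)

lemma commute_xH_yH {i j : Fin 18} (h : i ≠ j) : Commute (xH i) (yH j) :=
  PresentedGroup.commute_of_of (Or.inr <| Or.inr <| Or.inl ⟨i, j, h, rfl⟩)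

lemma commutatorElement_xH_yH (i : Fin 18) : ⁅xH i, yH i⁆ = zH :=
  (map_commutatorElement (PresentedGroup.mk HRels) _ _).symm.trans <|
    PresentedGroup.mk_eq_mk_of_mul_inv_mem (Or.inr <| Or.inr <| Or.inr <| Or.inl ⟨i, rfl⟩)

lemma commute_xH_zH (i : Fin 18) : Commute (xH i) zH :=
  PresentedGroup.commute_of_of (Or.inr <| Or.inr <| Or.inr <| Or.inr <| Or.inl ⟨i, rfl⟩)

lemma commute_yH_zH (i : Fin 18) : Commute (yH i) zH :=
  PresentedGroup.commute_of_of (Or.inr <| Or.inr <| Or.inr <| Or.inr <| Or.inr ⟨i, rfl⟩)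

lemma zH_mem_center : zH ∈ center Hgrp := by
  rw [← centralizer_univ, ← coe_top, ← PresentedGroup.closure_range_of, centralizer_closure,
    mem_centralizer_iff]
  rintro _ ⟨g, rfl⟩
  cases g with
  | x i => exact (commute_xH_zH i).eq
  | y i => exact (commute_yH_zH i).eq
  | z => rfl

def HGen.toHeisenberg : HGen → Heisenberg (Fin 18)
  | .x i => .x i
  | .y i => .y i
  | .z => .z

def toHeisenberg : Hgrp →* Heisenberg (Fin 18) :=
  PresentedGroup.toGroup (f := HGen.toHeisenberg) <| by
    rintro r (⟨i, j, hij, rfl⟩ | ⟨i, j, hij, rfl⟩ | ⟨i, j, hij, rfl⟩ | ⟨i, rfl⟩ | ⟨i, rfl⟩ |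
      ⟨i, rfl⟩) <;>
    simp_all [fx, fy, fz, ← commutatorElement_def, Heisenberg.commutatorElement_eq,
      HGen.toHeisenberg, Heisenberg.x, Heisenberg.y, Heisenberg.z, Heisenberg.ext_iff]

@[simp] lemma toHeisenberg_xH (i : Fin 18) : toHeisenberg (xH i) = .x i :=
  PresentedGroup.toGroup.of _
@[simp] lemma toHeisenberg_yH (i : Fin 18) : toHeisenberg (yH i) = .y i :=
  PresentedGroup.toGroup.of _
@[simp] lemma toHeisenberg_zH : toHeisenberg zH = .z :=
  PresentedGroup.toGroup.of _

lemma not_isOfFinOrder_zH : ¬IsOfFinOrder zH :=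
  fun h => Heisenberg.not_isOfFinOrder_z (by simpa using toHeisenberg.isOfFinOrder h)

instance : (zpowers zH).Normal := normal_of_le_center (zpowers_le.mpr zH_mem_center)

def xyH : Fin 18 ⊕ Fin 18 → Hgrp := Sum.elim xH yH

lemma commutatorElement_xyH_mem (k l : Fin 18 ⊕ Fin 18) : ⁅xyH k, xyH l⁆ ∈ zpowers zH := by
  have hxy (i j : Fin 18) : ⁅xH i, yH j⁆ ∈ zpowers zH := by
    obtain rfl | h := eq_or_ne i j
    · exact commutatorElement_xH_yH i ▸ mem_zpowers zH
    · exact commutatorElement_eq_one_iff_commute.mpr (commute_xH_yH h) ▸ one_mem _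
  rcases k with i | i <;> rcases l with j | j
  · exact commutatorElement_eq_one_iff_commute.mpr (commute_xH_xH i j) ▸ one_mem _
  · exact hxy i j
  · exact commutatorElement_inv (xH j) (yH i) ▸ inv_mem (hxy j i)
  · exact commutatorElement_eq_one_iff_commute.mpr (commute_yH_yH i j) ▸ one_mem _

lemma pairwise_commute_zpowersHom_xyH : Pairwise fun k l => ∀ m n : Multiplicative ℤ,
    Commute (zpowersHom _ (xyH k : Hgrp ⧸ zpowers zH) m)
      (zpowersHom _ (xyH l : Hgrp ⧸ zpowers zH) n) :=
  fun k l _ _ _ => (QuotientGroup.commute_mk_of_commutatorElement_mem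
    (commutatorElement_xyH_mem k l)).zpow_zpow _ _

def ofHorizontal : (Fin 18 ⊕ Fin 18 → Multiplicative ℤ) →* Hgrp ⧸ zpowers zH :=
  MonoidHom.noncommPiCoprod _ pairwise_commute_zpowersHom_xyH

lemma ofHorizontal_mulSingle (k : Fin 18 ⊕ Fin 18) :
    ofHorizontal (Pi.mulSingle k (.ofAdd 1)) = xyH k := by
  simp [ofHorizontal]

lemma ofHorizontal_horizontal_toHeisenberg_xyH (k : Fin 18 ⊕ Fin 18) :
    ofHorizontal (Heisenberg.horizontal (toHeisenberg (xyH k))) = xyH k := by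
  cases k <;> simp [xyH, Heisenberg.horizontal_x, Heisenberg.horizontal_y, ofHorizontal_mulSingle]

lemma mk'_zpowers_zH_eq_comp :
    QuotientGroup.mk' (zpowers zH) =
      ofHorizontal.comp (Heisenberg.horizontal.comp toHeisenberg) := by
  refine PresentedGroup.ext fun g => ?_
  cases g with
  | x i => exact (ofHorizontal_horizontal_toHeisenberg_xyH (.inl i)).symm
  | y i => exact (ofHorizontal_horizontal_toHeisenberg_xyH (.inr i)).symm
  | z =>
    change (zH : Hgrp ⧸ zpowers zH) = ofHorizontal (Heisenberg.horizontal (toHeisenberg zH))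
    rw [toHeisenberg_zH, Heisenberg.horizontal_z, map_one, QuotientGroup.eq_one_iff]
    exact mem_zpowers zH

theorem center_Hgrp : center Hgrp = zpowers zH := by
  refine le_antisymm (fun h hh => ?_) (zpowers_le.mpr zH_mem_center)
  have hcomm (g : Hgrp) : Commute (toHeisenberg h) (toHeisenberg g) :=
    (Commute.symm (mem_center_iff.mp hh g)).map toHeisenberg
  have hhoriz : Heisenberg.horizontal (toHeisenberg h) = 1 :=
    Heisenberg.horizontal_eq_one_of_commute (fun i => by simpa using hcomm (xH i))
      (fun i => by simpa using hcomm (yH i))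
  rw [← QuotientGroup.eq_one_iff, ← QuotientGroup.mk'_apply, mk'_zpowers_zH_eq_comp,
    MonoidHom.comp_apply, MonoidHom.comp_apply, hhoriz, map_one]

theorem stmt14_general (φ : Equiv.Perm (Fin 18) →* MulAut Hgrp)
    (hφz : ∀ σ : Equiv.Perm (Fin 18), φ σ zH = zH) :
    Subgroup.center (Hgrp ⋊[φ] Equiv.Perm (Fin 18))
        = Subgroup.closure {SemidirectProduct.inl zH} ∧
      ¬ IsOfFinOrder (SemidirectProduct.inl zH : Hgrp ⋊[φ] Equiv.Perm (Fin 18)) := by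
  have hφ : ∀ n ∈ center Hgrp, ∀ σ, φ σ n = n := by
    rw [center_Hgrp]
    rintro _ ⟨k, rfl⟩ σ
    simp [hφz]
  refine ⟨?_, ?_⟩
  · rw [SemidirectProduct.center_eq_map_inl (Equiv.Perm.center_eq_bot (by norm_num)) hφ,
      center_Hgrp, MonoidHom.map_zpowers, zpowers_eq_closure]
  · rw [SemidirectProduct.inl_injective.isOfFinOrder_iff]
    exact not_isOfFinOrder_zH

/-- For every index-permutation action `φ : S₁₈ → Aut(H)` (fixing `z`), the
center of the semidirect product `H ⋊[φ] S₁₈` is exactly the infinite cyclic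
subgroup generated by the image of `z`. -/
theorem stmt14 (φ : Equiv.Perm (Fin 18) →* MulAut Hgrp)
    (hφx : ∀ (σ : Equiv.Perm (Fin 18)) (i : Fin 18), φ σ (xH i) = xH (σ i))
    (hφy : ∀ (σ : Equiv.Perm (Fin 18)) (i : Fin 18), φ σ (yH i) = yH (σ i))
    (hφz : ∀ σ : Equiv.Perm (Fin 18), φ σ zH = zH) :
    Subgroup.center (Hgrp ⋊[φ] Equiv.Perm (Fin 18))
        = Subgroup.closure {SemidirectProduct.inl zH} ∧
      ¬ IsOfFinOrder (SemidirectProduct.inl zH : Hgrp ⋊[φ] Equiv.Perm (Fin 18)) :=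
  stmt14_general φ hφz
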